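/- If 𝔟 is finitely generated as an A-module (with A acting via f) and 𝔠 is finitely generated as an A-module (with A acting via g), then A⋈^{f,g}(𝔟,𝔠) is finitely generated as an A-module, where A acts on B × C via the homomorphism a ↦ (f(a), g(a)). Explicitly, if {b₁,…,bₙ} generates 𝔟 as an A-module and {c₁,…,c_m} generates 𝔠 as an A-module, then {(1,1)} ∪ {(bᵢ,0) : 1 ≤ i ≤ n} ∪ {(0,cⱼ) : 1 ≤ j ≤ m} generates A⋈^{f,g}(𝔟,𝔠) as an A-module. -/

import Mathlib

/-- The bi-amalgamation of `A` with `(B, C)` along `(𝔟, 𝔠)` with respect to `(f, g)`: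
the subring `{(f a + β, g a + γ) | a ∈ A, β ∈ 𝔟, γ ∈ 𝔠}` of `B × C`. -/
def biAmalgamation {A B C : Type*} [CommRing A] [CommRing B] [CommRing C]
    (f : A →+* B) (g : A →+* C) (𝔟 : Ideal B) (𝔠 : Ideal C) : Subring (B × C) where
  carrier := {x | ∃ a β γ, β ∈ 𝔟 ∧ γ ∈ 𝔠 ∧ x = (f a + β, g a + γ)}
  one_mem' := ⟨1, 0, 0, 𝔟.zero_mem, 𝔠.zero_mem, by simp <;> rfl⟩
  zero_mem' := ⟨0, 0, 0, 𝔟.zero_mem, 𝔠.zero_mem, by simp <;> rfl⟩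
  add_mem' := by
    rintro x y ⟨a₁, β₁, γ₁, hβ₁, hγ₁, rfl⟩ ⟨a₂, β₂, γ₂, hβ₂, hγ₂, rfl⟩
    exact ⟨a₁ + a₂, β₁ + β₂, γ₁ + γ₂, 𝔟.add_mem hβ₁ hβ₂, 𝔠.add_mem hγ₁ hγ₂, by
      simp only [Prod.ext_iff, map_add, Prod.fst_add, Prod.snd_add]
      constructor <;> ring⟩
  neg_mem' := by
    rintro x ⟨a, β, γ, hβ, hγ, rfl⟩
    exact ⟨-a, -β, -γ, 𝔟.neg_mem hβ, 𝔠.neg_mem hγ, by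
      simp only [Prod.ext_iff, map_neg, Prod.fst_neg, Prod.snd_neg]
      constructor <;> ring⟩
  mul_mem' := by
    rintro x y ⟨a₁, β₁, γ₁, hβ₁, hγ₁, rfl⟩ ⟨a₂, β₂, γ₂, hβ₂, hγ₂, rfl⟩
    refine ⟨a₁ * a₂, f a₁ * β₂ + β₁ * f a₂ + β₁ * β₂,
      g a₁ * γ₂ + γ₁ * g a₂ + γ₁ * γ₂,
      𝔟.add_mem (𝔟.add_mem (Ideal.mul_mem_left _ _ hβ₂) (Ideal.mul_mem_right _ _ hβ₁))
        (Ideal.mul_mem_right _ _ hβ₁),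
      𝔠.add_mem (𝔠.add_mem (Ideal.mul_mem_left _ _ hγ₂) (Ideal.mul_mem_right _ _ hγ₁))
        (Ideal.mul_mem_right _ _ hγ₁), by
      simp only [Prod.ext_iff, map_mul, Prod.fst_mul, Prod.snd_mul]
      constructor <;> ring⟩

/-- If `𝔟` is generated by `β₁,…,βₙ` as an `A`-module (via `f`) and `𝔠` is generated by
`γ₁,…,γₘ` as an `A`-module (via `g`), then `A ⋈^{f,g} (𝔟,𝔠)` is generated as an
`A`-module (where `a` acts on `B × C` as `(f a, g a)`) by
`{(1,1)} ∪ {(βᵢ,0)} ∪ {(0,γⱼ)}`; in particular it is a finitely generated `A`-module. -/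
theorem biAmalgamation_fg_module {A B C : Type*} [CommRing A] [CommRing B] [CommRing C]
    (f : A →+* B) (g : A →+* C) (𝔟 : Ideal B) (𝔠 : Ideal C)
    (hcomp : 𝔟.comap f = 𝔠.comap g)
    (n m : ℕ) (β : Fin n → B) (γ : Fin m → C)
    (hβ : ∀ i, β i ∈ 𝔟) (hγ : ∀ j, γ j ∈ 𝔠)
    (hβgen : ∀ x ∈ 𝔟, ∃ u : Fin n → A, x = ∑ i, f (u i) * β i)
    (hγgen : ∀ y ∈ 𝔠, ∃ v : Fin m → A, y = ∑ j, g (v j) * γ j) :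
    ∀ x ∈ biAmalgamation f g 𝔟 𝔠, ∃ (a : A) (u : Fin n → A) (v : Fin m → A),
      x = (f a, g a) + (∑ i, (f (u i) * β i, (0 : C))) + (∑ j, ((0 : B), g (v j) * γ j)) := by
  rintro x ⟨a, b, c, hb, hc, rfl⟩
  obtain ⟨u, hu⟩ := hβgen b hb
  obtain ⟨v, hv⟩ := hγgen c hc
  refine ⟨a, u, v, ?_⟩
  ext <;> simp [hu, hv, Prod.fst_sum, Prod.snd_sum]
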